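/- For the 11-tile Wang set 𝒯 = 𝒯₀ ∪ 𝒯₁: (a) there is no tiling of ℤ×{0,1} by 𝒯 in which every tile belongs to 𝒯₁; (b) there is no tiling of ℤ×{0,1,2} by 𝒯 in which rows 0 and 2 use only tiles of 𝒯₁ and row 1 uses only tiles of 𝒯₀; (c) there is no tiling of ℤ×{0,1,2,3} by 𝒯 whose rows 0,1,2,3 use only tiles of 𝒯₁, 𝒯₀, 𝒯₀, 𝒯₁ respectively; (d) there is no tiling of ℤ×{0,1,2,3,4} by 𝒯 in which every tile belongs to 𝒯₀. -/
import Mathlib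


structure WangTile (H V : Type*) where
  west : H
  east : H
  south : V
  north : V
deriving DecidableEq

def TilingOn {H V : Type*} (T : Set (WangTile H V)) (X : Set (ℤ × ℤ))
    (f : ℤ × ℤ → WangTile H V) : Prop :=
  (∀ p ∈ X, f p ∈ T) ∧
  (∀ x y : ℤ, (x, y) ∈ X → (x + 1, y) ∈ X →
    (f (x, y)).east = (f (x + 1, y)).west) ∧
  (∀ x y : ℤ, (x, y) ∈ X → (x, y + 1) ∈ X →
    (f (x, y)).north = (f (x, y + 1)).south)

def Tiling {H V : Type*} (T : Set (WangTile H V)) (f : ℤ × ℤ → WangTile H V) : Prop :=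
  TilingOn T Set.univ f

def TilesPlane {H V : Type*} (T : Set (WangTile H V)) : Prop :=
  ∃ f, Tiling T f

def PeriodicTiling {H V : Type*} (f : ℤ × ℤ → WangTile H V) : Prop :=
  ∃ u v : ℤ, (u, v) ≠ (0, 0) ∧ ∀ x y : ℤ, f (x + u, y + v) = f (x, y)

def Aperiodic {H V : Type*} (T : Set (WangTile H V)) : Prop :=
  TilesPlane T ∧ ∀ f, Tiling T f → ¬ PeriodicTiling f

def MinimallyAperiodic {H V : Type*} (T : Set (WangTile H V)) : Prop :=
  Aperiodic T ∧ ∀ S : Set (WangTile H V), S ⊂ T → ¬ TilesPlane S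

/-- The nine tiles `𝒯₀` of the 11-tile Wang set `𝒯`.  Horizontal (west/east) colors in
`Fin 4`, vertical (south/north) colors in `Fin 5`.  Tiles are written
`⟨west, east, south, north⟩`. -/
def T₀ : Set (WangTile (Fin 4) (Fin 5)) :=
  { ⟨0, 0, 1, 0⟩, ⟨0, 3, 2, 1⟩, ⟨1, 0, 2, 2⟩, ⟨1, 1, 4, 2⟩, ⟨1, 3, 2, 3⟩,
    ⟨3, 0, 1, 1⟩, ⟨3, 1, 1, 1⟩, ⟨3, 1, 2, 2⟩, ⟨3, 3, 3, 1⟩ }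

/-- The two tiles `𝒯₁` of the 11-tile Wang set `𝒯`. -/
def T₁ : Set (WangTile (Fin 4) (Fin 5)) := { ⟨2, 2, 1, 4⟩, ⟨2, 2, 0, 2⟩ }

/-- The 11-tile Wang set `𝒯 = 𝒯₀ ∪ 𝒯₁`. -/
def T11 : Set (WangTile (Fin 4) (Fin 5)) := T₀ ∪ T₁

/-- The horizontal strip `ℤ × {0, …, m}`. -/
def strip (m : ℕ) : Set (ℤ × ℤ) := {p : ℤ × ℤ | 0 ≤ p.2 ∧ p.2 ≤ (m : ℤ)}


/-- The nine tiles of `T₀` as a list. -/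
def L0 : List (WangTile (Fin 4) (Fin 5)) :=
  [⟨0, 0, 1, 0⟩, ⟨0, 3, 2, 1⟩, ⟨1, 0, 2, 2⟩, ⟨1, 1, 4, 2⟩, ⟨1, 3, 2, 3⟩,
    ⟨3, 0, 1, 1⟩, ⟨3, 1, 1, 1⟩, ⟨3, 1, 2, 2⟩, ⟨3, 3, 3, 1⟩]

/-- The two tiles of `T₁` as a list. -/
def L1 : List (WangTile (Fin 4) (Fin 5)) := [⟨2, 2, 1, 4⟩, ⟨2, 2, 0, 2⟩]

lemma mem_L0 {t : WangTile (Fin 4) (Fin 5)} (h : t ∈ T₀) : t ∈ L0 := by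
  simp only [T₀, Set.mem_insert_iff, Set.mem_singleton_iff] at h
  simp only [L0, List.mem_cons, List.not_mem_nil, or_false]
  tauto

lemma mem_L1 {t : WangTile (Fin 4) (Fin 5)} (h : t ∈ T₁) : t ∈ L1 := by
  simp only [T₁, Set.mem_insert_iff, Set.mem_singleton_iff] at h
  simp only [L1, List.mem_cons, List.not_mem_nil, or_false]
  tauto

/-- Rank function for case (c): on the pair of horizontal colors of rows 1 and 2. -/
def R2 (a b : Fin 4) : ℕ :=
  match a.val + 4 * b.val with
  | 0 => 3 | 1 => 4 | 3 => 2 | 12 => 3 | 13 => 1 | _ => 0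

/-- Rank function for case (d): on the 5-tuple of horizontal colors of rows 0–4. -/
def R5 (a b c d e : Fin 4) : ℕ :=
  match a.val + 4 * b.val + 16 * c.val + 64 * d.val + 256 * e.val with
  | 21 => 1
  | 23 => 1
  | 29 => 2
  | 31 => 2
  | 53 => 1
  | 55 => 1
  | 61 => 5
  | 63 => 5
  | 85 => 1
  | 87 => 1
  | 93 => 1
  | 95 => 1
  | 117 => 1
  | 119 => 1
  | 125 => 2
  | 127 => 2
  | 197 => 1
  | 199 => 1
  | 205 => 2
  | 207 => 2
  | 213 => 4
  | 215 => 4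
  | 221 => 7
  | 223 => 7
  | 241 => 3
  | 243 => 3
  | 245 => 6
  | 247 => 6
  | 252 => 2
  | 253 => 3
  | 255 => 2
  | 341 => 1
  | 343 => 1
  | 349 => 1
  | 351 => 1
  | 373 => 1
  | 375 => 1
  | 381 => 2
  | 383 => 2
  | 469 => 1
  | 471 => 1
  | 477 => 1
  | 479 => 1
  | 501 => 1
  | 503 => 1
  | 509 => 2
  | 511 => 2
  | 789 => 1
  | 791 => 1
  | 797 => 2
  | 799 => 2
  | 821 => 1
  | 823 => 1
  | 829 => 5
  | 831 => 5
  | 853 => 1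
  | 855 => 1
  | 861 => 2
  | 863 => 2
  | 885 => 1
  | 887 => 1
  | 893 => 5
  | 895 => 5
  | 965 => 1
  | 967 => 1
  | 973 => 2
  | 975 => 2
  | 981 => 4
  | 983 => 4
  | 989 => 7
  | 991 => 7
  | 1009 => 3
  | 1011 => 3
  | 1013 => 6
  | 1015 => 6
  | 1020 => 2
  | 1021 => 3
  | 1023 => 2
  | _ => 0

lemma R2_le (a b : Fin 4) : R2 a b ≤ 4 := by revert a b; decide

lemma R5_le (a b c d e : Fin 4) : R5 a b c d e ≤ 7 := by revert a b c d e; decide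

lemma step_a : ∀ a ∈ L1, ∀ b ∈ L1, a.north ≠ b.south := by decide

lemma step_b : ∀ a ∈ L1, ∀ t ∈ L0, a.north = t.south → ∀ b ∈ L1, t.north = b.south →
    t = ⟨0, 3, 2, 1⟩ := by decide

lemma step_c : ∀ a ∈ L1, ∀ t₁ ∈ L0, a.north = t₁.south → ∀ t₂ ∈ L0,
    t₁.north = t₂.south → ∀ b ∈ L1, t₂.north = b.south →
    R2 t₁.east t₂.east < R2 t₁.west t₂.west := by decide

lemma step_d : ∀ t₁ ∈ L0, ∀ t₂ ∈ L0, t₁.north = t₂.south → ∀ t₃ ∈ L0,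
    t₂.north = t₃.south → ∀ t₄ ∈ L0, t₃.north = t₄.south → ∀ t₅ ∈ L0,
    t₄.north = t₅.south →
    R5 t₁.east t₂.east t₃.east t₄.east t₅.east <
      R5 t₁.west t₂.west t₃.west t₄.west t₅.west := by decide

/-- (a) no tiling of `ℤ×{0,1}` by `𝒯` uses only tiles of `𝒯₁`;
(b) no tiling of `ℤ×{0,1,2}` by `𝒯` has rows `0,2` in `𝒯₁` and row `1` in `𝒯₀`;
(c) no tiling of `ℤ×{0,1,2,3}` by `𝒯` has rows in `𝒯₁,𝒯₀,𝒯₀,𝒯₁` respectively;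
(d) no tiling of `ℤ×{0,…,4}` by `𝒯` uses only tiles of `𝒯₀`. -/
theorem T11_strip_obstructions :
    (¬ ∃ f, TilingOn T11 (strip 1) f ∧ ∀ p ∈ strip 1, f p ∈ T₁) ∧
    (¬ ∃ f, TilingOn T11 (strip 2) f ∧ ∀ x : ℤ,
      f (x, 0) ∈ T₁ ∧ f (x, 1) ∈ T₀ ∧ f (x, 2) ∈ T₁) ∧
    (¬ ∃ f, TilingOn T11 (strip 3) f ∧ ∀ x : ℤ,
      f (x, 0) ∈ T₁ ∧ f (x, 1) ∈ T₀ ∧ f (x, 2) ∈ T₀ ∧ f (x, 3) ∈ T₁) ∧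
    (¬ ∃ f, TilingOn T11 (strip 4) f ∧ ∀ p ∈ strip 4, f p ∈ T₀) := by
  have hstrip : ∀ (m : ℕ) (x y : ℤ), 0 ≤ y → y ≤ (m : ℤ) → (x, y) ∈ strip m := by
    intro m x y h1 h2; exact ⟨h1, h2⟩
  refine ⟨?_, ?_, ?_, ?_⟩
  · rintro ⟨f, ⟨hT, hH, hV⟩, hmem⟩
    have hv := hV 0 0 (hstrip 1 0 0 (by norm_num) (by norm_num))
      (hstrip 1 0 (0 + 1) (by norm_num) (by norm_num))
    exact step_a _ (mem_L1 (hmem _ (hstrip 1 0 0 (by norm_num) (by norm_num))))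
      _ (mem_L1 (hmem _ (hstrip 1 0 (0 + 1) (by norm_num) (by norm_num)))) hv
  · rintro ⟨f, ⟨hT, hH, hV⟩, hmem⟩
    have force : ∀ x : ℤ, f (x, 1) = ⟨0, 3, 2, 1⟩ := by
      intro x
      have hv1 := hV x 0 (hstrip 2 x 0 (by norm_num) (by norm_num))
        (hstrip 2 x (0 + 1) (by norm_num) (by norm_num))
      have hv2 := hV x 1 (hstrip 2 x 1 (by norm_num) (by norm_num))
        (hstrip 2 x (1 + 1) (by norm_num) (by norm_num))
      norm_num at hv1 hv2
      exact step_b _ (mem_L1 (hmem x).1) _ (mem_L0 (hmem x).2.1) hv1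
        _ (mem_L1 (hmem x).2.2) hv2
    have hh := hH 0 1 (hstrip 2 0 1 (by norm_num) (by norm_num))
      (hstrip 2 (0 + 1) 1 (by norm_num) (by norm_num))
    rw [force 0, force (0 + 1)] at hh
    exact absurd hh (by decide)
  · rintro ⟨f, ⟨hT, hH, hV⟩, hmem⟩
    set r : ℤ → ℕ := fun x => R2 (f (x, 1)).west (f (x, 2)).west with hr
    have key : ∀ x : ℤ, r (x + 1) < r x := by
      intro x
      have hv1 := hV x 0 (hstrip 3 x 0 (by norm_num) (by norm_num))
        (hstrip 3 x (0 + 1) (by norm_num) (by norm_num))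
      have hv2 := hV x 1 (hstrip 3 x 1 (by norm_num) (by norm_num))
        (hstrip 3 x (1 + 1) (by norm_num) (by norm_num))
      have hv3 := hV x 2 (hstrip 3 x 2 (by norm_num) (by norm_num))
        (hstrip 3 x (2 + 1) (by norm_num) (by norm_num))
      norm_num at hv1 hv2 hv3
      have hh1 := hH x 1 (hstrip 3 x 1 (by norm_num) (by norm_num))
        (hstrip 3 (x + 1) 1 (by norm_num) (by norm_num))
      have hh2 := hH x 2 (hstrip 3 x 2 (by norm_num) (by norm_num))
        (hstrip 3 (x + 1) 2 (by norm_num) (by norm_num))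
      have := step_c _ (mem_L1 (hmem x).1) _ (mem_L0 (hmem x).2.1) hv1
        _ (mem_L0 (hmem x).2.2.1) hv2 _ (mem_L1 (hmem x).2.2.2) hv3
      simpa only [hr, hh1, hh2] using this
    have desc : ∀ n : ℕ, r (n : ℤ) + n ≤ 4 := by
      intro n
      induction n with
      | zero =>
        show r (((0:ℕ):ℤ)) + 0 ≤ 4
        rw [add_zero]
        exact R2_le _ _
      | succ k ih =>
        have := key (k : ℤ)
        push_cast
        omega
    have := desc 5
    omega
  · rintro ⟨f, ⟨hT, hH, hV⟩, hmem⟩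
    set r : ℤ → ℕ := fun x =>
      R5 (f (x, 0)).west (f (x, 1)).west (f (x, 2)).west (f (x, 3)).west (f (x, 4)).west
      with hr
    have key : ∀ x : ℤ, r (x + 1) < r x := by
      intro x
      have hv1 := hV x 0 (hstrip 4 x 0 (by norm_num) (by norm_num))
        (hstrip 4 x (0 + 1) (by norm_num) (by norm_num))
      have hv2 := hV x 1 (hstrip 4 x 1 (by norm_num) (by norm_num))
        (hstrip 4 x (1 + 1) (by norm_num) (by norm_num))
      have hv3 := hV x 2 (hstrip 4 x 2 (by norm_num) (by norm_num))
        (hstrip 4 x (2 + 1) (by norm_num) (by norm_num))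
      have hv4 := hV x 3 (hstrip 4 x 3 (by norm_num) (by norm_num))
        (hstrip 4 x (3 + 1) (by norm_num) (by norm_num))
      norm_num at hv1 hv2 hv3 hv4
      have hh0 := hH x 0 (hstrip 4 x 0 (by norm_num) (by norm_num))
        (hstrip 4 (x + 1) 0 (by norm_num) (by norm_num))
      have hh1 := hH x 1 (hstrip 4 x 1 (by norm_num) (by norm_num))
        (hstrip 4 (x + 1) 1 (by norm_num) (by norm_num))
      have hh2 := hH x 2 (hstrip 4 x 2 (by norm_num) (by norm_num))
        (hstrip 4 (x + 1) 2 (by norm_num) (by norm_num))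
      have hh3 := hH x 3 (hstrip 4 x 3 (by norm_num) (by norm_num))
        (hstrip 4 (x + 1) 3 (by norm_num) (by norm_num))
      have hh4 := hH x 4 (hstrip 4 x 4 (by norm_num) (by norm_num))
        (hstrip 4 (x + 1) 4 (by norm_num) (by norm_num))
      have m0 := mem_L0 (hmem _ (hstrip 4 x 0 (by norm_num) (by norm_num)))
      have m1 := mem_L0 (hmem _ (hstrip 4 x 1 (by norm_num) (by norm_num)))
      have m2 := mem_L0 (hmem _ (hstrip 4 x 2 (by norm_num) (by norm_num)))
      have m3 := mem_L0 (hmem _ (hstrip 4 x 3 (by norm_num) (by norm_num)))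
      have m4 := mem_L0 (hmem _ (hstrip 4 x 4 (by norm_num) (by norm_num)))
      have := step_d _ m0 _ m1 hv1 _ m2 hv2 _ m3 hv3 _ m4 hv4
      simpa only [hr, hh0, hh1, hh2, hh3, hh4] using this
    have desc : ∀ n : ℕ, r (n : ℤ) + n ≤ 7 := by
      intro n
      induction n with
      | zero =>
        show r (((0:ℕ):ℤ)) + 0 ≤ 7
        rw [add_zero]
        exact R5_le _ _ _ _ _
      | succ k ih =>
        have := key (k : ℤ)
        push_cast
        omega
    have := desc 8
    omega
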